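/- The Boltzmann maximizer is unique: with B finite, Q : B → ℝ, β > 0, if a probability distribution g on B satisfies ∑_b g(b) Q(b) + β H(g) = β log ∑_b exp(Q(b)/β), then g(b) = exp(Q(b)/β)/∑_{b'} exp(Q(b')/β) for all b. -/

import Mathlib

/-!
Put `p := softmax (Q / β)`. For a probability vector `g`, `log p b = Q b / β - log Z` turns the
gap `β log Z - (∑ g Q + β H(g))` into `β` times the relative entropy `∑ g log (g / p)`.
Relative entropy equals `∑ p · klFun (g / p)`, a sum of nonnegative terms, and `klFun` vanishes
only at `1`; so the gap is zero only when `g = p`.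
-/

open Real InformationTheory Finset

section

variable {ι : Type*} [Fintype ι]

lemma sum_exp_pos [Nonempty ι] (f : ι → ℝ) : 0 < ∑ b, exp (f b) :=
  sum_pos (fun _ _ => exp_pos _) univ_nonempty

noncomputable def softmax (f : ι → ℝ) (b : ι) : ℝ := exp (f b) / ∑ b', exp (f b')

lemma softmax_pos [Nonempty ι] (f : ι → ℝ) (b : ι) : 0 < softmax f b :=
  div_pos (exp_pos _) (sum_exp_pos f)

lemma sum_softmax [Nonempty ι] (f : ι → ℝ) : ∑ b, softmax f b = 1 := by
  simp only [softmax, ← sum_div]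
  exact div_self (sum_exp_pos f).ne'

lemma log_softmax [Nonempty ι] (f : ι → ℝ) (b : ι) :
    log (softmax f b) = f b - log (∑ b', exp (f b')) := by
  rw [softmax, log_div (exp_pos _).ne' (sum_exp_pos f).ne', log_exp]

lemma mul_klFun_div {p : ℝ} (x : ℝ) (hp : p ≠ 0) :
    p * klFun (x / p) = x * log (x / p) + p - x := by
  rw [klFun_apply]
  field_simp

lemma sum_mul_log_div_eq_sum_mul_klFun {p g : ι → ℝ} (hp : ∀ b, p b ≠ 0)
    (hsum : ∑ b, g b = ∑ b, p b) :
    ∑ b, g b * log (g b / p b) = ∑ b, p b * klFun (g b / p b) := by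
  simp only [mul_klFun_div _ (hp _)]
  rw [sum_sub_distrib, sum_add_distrib, hsum]
  ring

lemma eq_of_sum_mul_log_div_eq_zero {p g : ι → ℝ} (hp : ∀ b, 0 < p b) (hg : ∀ b, 0 ≤ g b)
    (hsum : ∑ b, g b = ∑ b, p b) (h : ∑ b, g b * log (g b / p b) = 0) : g = p := by
  rw [sum_mul_log_div_eq_sum_mul_klFun (fun b => (hp b).ne') hsum] at h
  have hratio : ∀ b, 0 ≤ g b / p b := fun b => div_nonneg (hg b) (hp b).le
  have hterm := (sum_eq_zero_iff_of_nonneg fun b _ =>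
    mul_nonneg (hp b).le (klFun_nonneg (hratio b))).1 h
  funext b
  have hb := hterm b (mem_univ b)
  rw [mul_eq_zero, klFun_eq_zero_iff (hratio b), div_eq_one_iff_eq (hp b).ne'] at hb
  exact hb.resolve_left (hp b).ne'

lemma mul_log_div_softmax [Nonempty ι] (f : ι → ℝ) (x : ℝ) (b : ι) :
    x * log (x / softmax f b) = x * log x - x * f b + x * log (∑ b', exp (f b')) := by
  rcases eq_or_ne x 0 with rfl | hx
  · simp
  · rw [log_div hx (softmax_pos f b).ne', log_softmax]
    ring

lemma sum_mul_log_div_softmax [Nonempty ι] (f g : ι → ℝ) (hg : ∑ b, g b = 1) :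
    ∑ b, g b * log (g b / softmax f b)
      = log (∑ b, exp (f b)) - (∑ b, g b * f b + -∑ b, g b * log (g b)) := by
  simp only [mul_log_div_softmax]
  rw [sum_add_distrib, sum_sub_distrib, ← sum_mul, hg]
  ring

end

theorem boltzmann_maximizer_unique {B : Type*} [Fintype B] [Nonempty B]
    (Q : B → ℝ) (β : ℝ) (hβ : 0 < β)
    (g : B → ℝ) (hg0 : ∀ b, 0 ≤ g b) (hg1 : ∑ b, g b = 1)
    (hopt : ∑ b, g b * Q b + β * (-∑ b, g b * Real.log (g b))
      = β * Real.log (∑ b, Real.exp (Q b / β))) :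
    ∀ b, g b = Real.exp (Q b / β) / ∑ b', Real.exp (Q b' / β) := by
  have hrel : ∑ b, g b * log (g b / softmax (fun b => Q b / β) b) = 0 := by
    rw [sum_mul_log_div_softmax _ _ hg1]
    have hQ : ∑ b, g b * (Q b / β) = (∑ b, g b * Q b) / β := by
      rw [sum_div]
      simp only [mul_div_assoc]
    rw [hQ, sub_eq_zero]
    field_simp
    linarith
  exact congrFun <| eq_of_sum_mul_log_div_eq_zero (softmax_pos _) hg0
    (hg1.trans (sum_softmax _).symm) hrel
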